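/- Let V be a finite-dimensional complex vector space of dimension n and W a finite subgroup of GL(V) such that W is generated by its reflections Ref(W) = {s ∈ W : cod(s) = 1}, and such that V^W = {v ∈ V : w v = v for all w ∈ W} = 0. Then for every integer r with 0 ≤ r ≤ n, one has Z(ℂW) ∩ F_r(ℂW) = Σ_U Tr_{W_U}^W( Z(ℂW_U) ), where the sum runs over all linear subspaces U ⊆ V whose pointwise stabilizer W_U = {w ∈ W : w u = u for all u ∈ U} satisfies dim_ℂ V − dim_ℂ V^{W_U} = r. -/

import Mathlib

/-- The fixed subspace `V^w = {v ∈ V | w v = v}` of an element `w` of a subgroup `W` of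
`GL(V)`. -/
noncomputable def fixedSpace {V : Type*} [AddCommGroup V] [Module ℂ V]
    (W : Subgroup (V →ₗ[ℂ] V)ˣ) (w : W) : Submodule ℂ V :=
  LinearMap.eqLocus ((w : (V →ₗ[ℂ] V)ˣ) : V →ₗ[ℂ] V) LinearMap.id

/-- `cod(w) = dim V − dim V^w`. -/
noncomputable def cod {V : Type*} [AddCommGroup V] [Module ℂ V]
    (W : Subgroup (V →ₗ[ℂ] V)ˣ) (w : W) : ℕ :=
  Module.finrank ℂ V - Module.finrank ℂ (fixedSpace W w)

/-- `F_i(ℂW)`: the ℂ-span in the group algebra `ℂW` of the group elements `w` with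
`cod(w) ≤ i`. -/
noncomputable def filt {V : Type*} [AddCommGroup V] [Module ℂ V]
    (W : Subgroup (V →ₗ[ℂ] V)ˣ) (i : ℕ) : Submodule ℂ (MonoidAlgebra ℂ W) :=
  Submodule.span ℂ {x | ∃ w : W, cod W w ≤ i ∧ x = MonoidAlgebra.of ℂ W w}

/-- The pointwise stabilizer `W_U = {w ∈ W | ∀ u ∈ U, w u = u}` of a subspace `U ⊆ V`. -/
def fixator {V : Type*} [AddCommGroup V] [Module ℂ V]
    (W : Subgroup (V →ₗ[ℂ] V)ˣ) (U : Submodule ℂ V) : Subgroup W where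
  carrier := {w : W | ∀ u ∈ U, ((w : (V →ₗ[ℂ] V)ˣ) : V →ₗ[ℂ] V) u = u}
  one_mem' := by intro u hu; simp
  mul_mem' := by
    intro a b ha hb u hu
    simp only [Subgroup.coe_mul, Units.val_mul, Module.End.mul_apply]
    rw [hb u hu, ha u hu]
  inv_mem' := by
    intro a ha u hu
    conv_lhs => rw [← ha u hu]
    rw [← Module.End.mul_apply, ← Units.val_mul, ← Subgroup.coe_mul, inv_mul_cancel]
    simp

/-- The fixed subspace `V^H = {v ∈ V | ∀ w ∈ H, w v = v}` of a subgroup `H ≤ W`. -/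
noncomputable def groupFixed {V : Type*} [AddCommGroup V] [Module ℂ V]
    (W : Subgroup (V →ₗ[ℂ] V)ˣ) (H : Subgroup W) : Submodule ℂ V :=
  ⨅ w : H, fixedSpace W (w : W)

/-- The truncated induction (transfer) map `Tr_H^W : ℂW → ℂW`,
`z ↦ (1/|H|) Σ_{g ∈ W} g z g⁻¹`, as a ℂ-linear endomorphism of `ℂW`. -/
noncomputable def TrMap {V : Type*} [AddCommGroup V] [Module ℂ V]
    (W : Subgroup (V →ₗ[ℂ] V)ˣ) [Fintype W] (H : Subgroup W) :
    MonoidAlgebra ℂ W →ₗ[ℂ] MonoidAlgebra ℂ W :=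
  (Nat.card H : ℂ)⁻¹ •
    ∑ g : W,
      (LinearMap.mulLeft ℂ (MonoidAlgebra.of ℂ W g)).comp
        (LinearMap.mulRight ℂ (MonoidAlgebra.of ℂ W g⁻¹))

/-- The inclusion `ℂH → ℂW` of group algebras induced by the inclusion of a subgroup
`H ≤ W`. -/
noncomputable def subgroupAlgebraIncl {V : Type*} [AddCommGroup V] [Module ℂ V]
    (W : Subgroup (V →ₗ[ℂ] V)ˣ) (H : Subgroup W) :
    MonoidAlgebra ℂ H →ₐ[ℂ] MonoidAlgebra ℂ W :=
  MonoidAlgebra.mapDomainAlgHom ℂ ℂ H.subtype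

/-!
The inclusion `⊇` is formal: `Tr_H^W` lands in the center, conjugation preserves `cod`, and
every element of `W_U` fixes `V^{W_U}`, so has codimension at most that of `W_U`.

For `⊆`, a central `x` equals `|W|⁻¹ Σ_g g x g⁻¹`, so it suffices that the class sum of each `w`
with `cod w ≤ r` is a trace from a parabolic subgroup of codimension exactly `r` containing `w`;
and the class sum of `w` in `W` is `Tr_H^W` of its (central) class sum in any `H ∋ w`. Such an
`H = W_U` exists because, as `W` is generated by reflections and `V^W = 0`, any nonzero subspace
of the form `V^{W_U}` is moved by some reflection `s`, and `V^{W_U} ∩ V^s` is again of this form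
and has dimension one less. Starting from `V^w` and descending gives every dimension down to `0`.
-/

open Module

theorem Submodule.finrank_inf_add_one_of_not_le {K E : Type*} [DivisionRing K] [AddCommGroup E]
    [Module K E] [FiniteDimensional K E] {U H : Submodule K E}
    (hH : finrank K H + 1 = finrank K E) (hU : ¬ U ≤ H) :
    finrank K ↥(U ⊓ H) + 1 = finrank K U := by
  have hlt : H < U ⊔ H := lt_of_le_of_ne le_sup_right fun h => hU (h ▸ le_sup_left)
  have := Submodule.finrank_lt_finrank_of_lt hlt
  have := (U ⊔ H).finrank_le
  have := Submodule.finrank_sup_add_finrank_inf_eq U H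
  omega

section FixedSpaces

variable {V : Type*} [AddCommGroup V] [Module ℂ V] {W : Subgroup (V →ₗ[ℂ] V)ˣ}

theorem mem_fixedSpace {w : W} {v : V} :
    v ∈ fixedSpace W w ↔ ((w : (V →ₗ[ℂ] V)ˣ) : V →ₗ[ℂ] V) v = v := Iff.rfl

theorem mem_groupFixed {H : Subgroup W} {v : V} :
    v ∈ groupFixed W H ↔ ∀ h ∈ H, v ∈ fixedSpace W h := by
  simp [groupFixed, Submodule.mem_iInf]

theorem le_groupFixed_iff {U : Submodule ℂ V} {H : Subgroup W} :
    U ≤ groupFixed W H ↔ H ≤ fixator W U :=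
  ⟨fun hU _ hh _ hu => mem_groupFixed.1 (hU hu) _ hh,
    fun hH _ hu => mem_groupFixed.2 fun _ hh => hH hh _ hu⟩

theorem le_groupFixed_fixator (U : Submodule ℂ V) : U ≤ groupFixed W (fixator W U) :=
  le_groupFixed_iff.2 le_rfl

theorem fixator_antitone : Antitone (fixator W) :=
  fun _ _ hU _ hw _ hu => hw _ (hU hu)

theorem groupFixed_antitone : Antitone (groupFixed W) :=
  fun _ _ hHK _ hv => mem_groupFixed.2 fun h hh => mem_groupFixed.1 hv h (hHK hh)

theorem groupFixed_le_fixedSpace {H : Subgroup W} {h : W} (hh : h ∈ H) :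
    groupFixed W H ≤ fixedSpace W h :=
  fun _ hv => mem_groupFixed.1 hv h hh

theorem mem_fixator_fixedSpace (w : W) : w ∈ fixator W (fixedSpace W w) :=
  fun _ hu => hu

theorem groupFixed_fixator_fixedSpace (w : W) :
    groupFixed W (fixator W (fixedSpace W w)) = fixedSpace W w :=
  (groupFixed_le_fixedSpace (mem_fixator_fixedSpace w)).antisymm (le_groupFixed_fixator _)

theorem groupFixed_fixator_inf {U₁ U₂ : Submodule ℂ V}
    (h₁ : groupFixed W (fixator W U₁) = U₁) (h₂ : groupFixed W (fixator W U₂) = U₂) :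
    groupFixed W (fixator W (U₁ ⊓ U₂)) = U₁ ⊓ U₂ := by
  refine le_antisymm (le_inf ?_ ?_) (le_groupFixed_fixator _)
  · exact (groupFixed_antitone (fixator_antitone inf_le_left)).trans h₁.le
  · exact (groupFixed_antitone (fixator_antitone inf_le_right)).trans h₂.le

theorem fixedSpace_conj (g w : W) :
    fixedSpace W (g * w * g⁻¹) =
      (fixedSpace W w).map
        (LinearMap.GeneralLinearGroup.toLinearEquiv (g : (V →ₗ[ℂ] V)ˣ) : V →ₗ[ℂ] V) := by
  ext v
  set e := LinearMap.GeneralLinearGroup.toLinearEquiv (g : (V →ₗ[ℂ] V)ˣ)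
  rw [Submodule.mem_map_equiv, mem_fixedSpace, mem_fixedSpace]
  exact e.eq_symm_apply.symm

theorem cod_conj [FiniteDimensional ℂ V] (g w : W) : cod W (g * w * g⁻¹) = cod W w := by
  rw [cod, cod, fixedSpace_conj, LinearEquiv.finrank_map_eq]

end FixedSpaces

section Parabolic

variable {V : Type*} [AddCommGroup V] [Module ℂ V] {W : Subgroup (V →ₗ[ℂ] V)ˣ}

theorem exists_reflection_not_le (hrefl : Subgroup.closure {s : W | cod W s = 1} = ⊤)
    (hfix : groupFixed W ⊤ = ⊥) {U : Submodule ℂ V} (hU : U ≠ ⊥) :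
    ∃ s : W, cod W s = 1 ∧ ¬ U ≤ fixedSpace W s := by
  by_contra! h
  refine hU (le_bot_iff.1 (hfix ▸ le_groupFixed_iff.2 ?_))
  exact hrefl ▸ (Subgroup.closure_le _).2 fun s hs _ hu => h s hs hu

variable [FiniteDimensional ℂ V]

theorem finrank_fixedSpace_add_one_of_cod_eq_one {s : W} (hs : cod W s = 1) :
    finrank ℂ (fixedSpace W s) + 1 = finrank ℂ V := by
  have := (fixedSpace W s).finrank_le
  rw [cod] at hs
  omega

theorem exists_le_groupFixed_fixator_eq (hrefl : Subgroup.closure {s : W | cod W s = 1} = ⊤)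
    (hfix : groupFixed W ⊤ = ⊥) {U : Submodule ℂ V} (hU : groupFixed W (fixator W U) = U)
    {d : ℕ} (hd : d ≤ finrank ℂ U) :
    ∃ U' ≤ U, groupFixed W (fixator W U') = U' ∧ finrank ℂ U' = d := by
  induction hk : finrank ℂ U - d generalizing U with
  | zero => exact ⟨U, le_rfl, hU, by omega⟩
  | succ k ih =>
    obtain ⟨s, hs, hUs⟩ := exists_reflection_not_le hrefl hfix
      (U := U) (Submodule.one_le_finrank_iff.1 (by omega))
    have hdim := Submodule.finrank_inf_add_one_of_not_le
      (finrank_fixedSpace_add_one_of_cod_eq_one hs) hUs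
    obtain ⟨U', hU'le, hU'⟩ := ih (groupFixed_fixator_inf hU (groupFixed_fixator_fixedSpace s))
      (by omega) (by omega)
    exact ⟨U', hU'le.trans inf_le_left, hU'⟩

theorem exists_mem_fixator_codim_eq (hrefl : Subgroup.closure {s : W | cod W s = 1} = ⊤)
    (hfix : groupFixed W ⊤ = ⊥) {r : ℕ} (hr : r ≤ finrank ℂ V) {w : W} (hw : cod W w ≤ r) :
    ∃ U : Submodule ℂ V, w ∈ fixator W U ∧
      finrank ℂ V - finrank ℂ (groupFixed W (fixator W U)) = r := by
  have := (fixedSpace W w).finrank_le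
  obtain ⟨U, hUw, hU, hdim⟩ := exists_le_groupFixed_fixator_eq hrefl hfix
    (groupFixed_fixator_fixedSpace w) (d := finrank ℂ V - r) (by rw [cod] at hw; omega)
  exact ⟨U, fixator_antitone hUw (mem_fixator_fixedSpace w), by rw [hU, hdim]; omega⟩

theorem cod_le_of_mem_fixator {U : Submodule ℂ V} {h : W} (hh : h ∈ fixator W U) :
    cod W h ≤ finrank ℂ V - finrank ℂ (groupFixed W (fixator W U)) :=
  Nat.sub_le_sub_left (Submodule.finrank_mono (groupFixed_le_fixedSpace hh)) _

end Parabolic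

namespace MonoidAlgebra

variable (k G : Type*) [CommSemiring k] [Group G] [Fintype G]

noncomputable def conjSum : MonoidAlgebra k G →ₗ[k] MonoidAlgebra k G :=
  ∑ g : G, (LinearMap.mulLeft k (of k G g)).comp (LinearMap.mulRight k (of k G g⁻¹))

variable {k G}

theorem mapDomainAlgHom_of {M N : Type*} [Monoid M] [Monoid N] (f : M →* N) (m : M) :
    mapDomainAlgHom k k f (of k M m) = of k N (f m) := by
  simp [of_apply]

theorem conjSum_apply (x : MonoidAlgebra k G) :
    conjSum k G x = ∑ g : G, of k G g * x * of k G g⁻¹ := by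
  simp [conjSum, mul_assoc]

theorem conjSum_conj (h : G) (x : MonoidAlgebra k G) :
    conjSum k G (of k G h * x * of k G h⁻¹) = conjSum k G x := by
  rw [conjSum_apply, conjSum_apply]
  refine Fintype.sum_equiv (Equiv.mulRight h) _ _ fun g => ?_
  simp only [Equiv.coe_mulRight, mul_inv_rev, map_mul, mul_assoc]

theorem of_mul_conjSum_mul_of_inv (h : G) (x : MonoidAlgebra k G) :
    of k G h * conjSum k G x * of k G h⁻¹ = conjSum k G x := by
  rw [conjSum_apply, Finset.mul_sum, Finset.sum_mul]
  refine Fintype.sum_equiv (Equiv.mulLeft h) _ _ fun g => ?_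
  simp only [Equiv.coe_mulLeft, mul_inv_rev, map_mul, mul_assoc]

theorem of_mul_conjSum (h : G) (x : MonoidAlgebra k G) :
    of k G h * conjSum k G x = conjSum k G x * of k G h := by
  conv_rhs => rw [← of_mul_conjSum_mul_of_inv h x]
  rw [mul_assoc, ← map_mul, inv_mul_cancel, map_one, mul_one]

theorem conjSum_mem_center (x : MonoidAlgebra k G) :
    conjSum k G x ∈ Subalgebra.center k (MonoidAlgebra k G) := by
  rw [Subalgebra.mem_center_iff]
  intro y
  induction y using MonoidAlgebra.induction_on with
  | of g => exact of_mul_conjSum g x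
  | add y z hy hz => rw [add_mul, mul_add, hy, hz]
  | smul c y hy => rw [smul_mul_assoc, mul_smul_comm, hy]

theorem conjSum_eq_card_smul_of_mem_center {x : MonoidAlgebra k G}
    (hx : x ∈ Subalgebra.center k (MonoidAlgebra k G)) :
    conjSum k G x = Fintype.card G • x := by
  have hconj (g : G) : of k G g * x * of k G g⁻¹ = x := by
    rw [Subalgebra.mem_center_iff.1 hx, mul_assoc, ← map_mul, mul_inv_cancel, map_one, mul_one]
  rw [conjSum_apply, Finset.sum_congr rfl fun g _ => hconj g, Finset.sum_const, Finset.card_univ]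

theorem conjSum_mapDomain_conjSum (H : Subgroup G) [Fintype H] (y : MonoidAlgebra k H) :
    conjSum k G (mapDomainAlgHom k k H.subtype (conjSum k H y)) =
      Fintype.card H • conjSum k G (mapDomainAlgHom k k H.subtype y) := by
  rw [conjSum_apply (G := H), map_sum, map_sum]
  simp only [map_mul, mapDomainAlgHom_of, Subgroup.coe_subtype, Subgroup.coe_inv, conjSum_conj,
    Finset.sum_const, Finset.card_univ]

end MonoidAlgebra

section Traces

open MonoidAlgebra

variable {V : Type*} [AddCommGroup V] [Module ℂ V] {W : Subgroup (V →ₗ[ℂ] V)ˣ}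

theorem conj_mem_filt [FiniteDimensional ℂ V] {i : ℕ} (g : W) {x : MonoidAlgebra ℂ W}
    (hx : x ∈ filt W i) : of ℂ W g * x * of ℂ W g⁻¹ ∈ filt W i := by
  induction hx using Submodule.span_induction with
  | mem y hy =>
    obtain ⟨w, hw, rfl⟩ := hy
    rw [← map_mul, ← map_mul]
    exact Submodule.subset_span ⟨_, (cod_conj g w).trans_le hw, rfl⟩
  | zero => simp
  | add x y _ _ hx hy => simpa [mul_add, add_mul] using add_mem hx hy
  | smul c x _ hx => simpa using Submodule.smul_mem _ c hx

theorem subgroupAlgebraIncl_mem_filt {H : Subgroup W} {i : ℕ} (hH : ∀ h ∈ H, cod W h ≤ i)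
    (z : MonoidAlgebra ℂ H) : subgroupAlgebraIncl W H z ∈ filt W i := by
  induction z using MonoidAlgebra.induction_on with
  | of h => exact Submodule.subset_span ⟨h, hH h h.2, mapDomainAlgHom_of _ h⟩
  | add y z hy hz => rw [map_add]; exact add_mem hy hz
  | smul c y hy => rw [map_smul]; exact Submodule.smul_mem _ c hy

variable [Fintype W]

theorem TrMap_eq (H : Subgroup W) : TrMap W H = (Nat.card H : ℂ)⁻¹ • conjSum ℂ W := rfl

theorem TrMap_subgroupAlgebraIncl_conjSum (H : Subgroup W) [Fintype H]
    (y : MonoidAlgebra ℂ H) :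
    TrMap W H (subgroupAlgebraIncl W H (conjSum ℂ H y)) =
      conjSum ℂ W (subgroupAlgebraIncl W H y) := by
  rw [TrMap_eq, LinearMap.smul_apply, subgroupAlgebraIncl, conjSum_mapDomain_conjSum,
    ← Nat.cast_smul_eq_nsmul ℂ, smul_smul, Nat.card_eq_fintype_card,
    inv_mul_cancel₀ (Nat.cast_ne_zero.2 Fintype.card_ne_zero), one_smul]

theorem inv_card_smul_conjSum_of_mem_center {x : MonoidAlgebra ℂ W}
    (hx : x ∈ Subalgebra.center ℂ (MonoidAlgebra ℂ W)) :
    (Fintype.card W : ℂ)⁻¹ • conjSum ℂ W x = x := by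
  rw [conjSum_eq_card_smul_of_mem_center hx, ← Nat.cast_smul_eq_nsmul ℂ, smul_smul,
    inv_mul_cancel₀ (Nat.cast_ne_zero.2 Fintype.card_ne_zero), one_smul]

/-- `Tr_H^W(Z(ℂH))`. -/
noncomputable def centerTrace (W : Subgroup (V →ₗ[ℂ] V)ˣ) [Fintype W] (H : Subgroup W) :
    Submodule ℂ (MonoidAlgebra ℂ W) :=
  Submodule.map (TrMap W H)
    (Submodule.map (subgroupAlgebraIncl W H).toLinearMap
      (Subalgebra.toSubmodule (Subalgebra.center ℂ (MonoidAlgebra ℂ H))))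

theorem centerTrace_le_center (H : Subgroup W) :
    centerTrace W H ≤ Subalgebra.toSubmodule (Subalgebra.center ℂ (MonoidAlgebra ℂ W)) := by
  rintro _ ⟨_, -, rfl⟩
  rw [TrMap_eq, LinearMap.smul_apply]
  exact Subalgebra.smul_mem _ (conjSum_mem_center _) _

theorem centerTrace_le_filt [FiniteDimensional ℂ V] {H : Subgroup W} {i : ℕ}
    (hH : ∀ h ∈ H, cod W h ≤ i) : centerTrace W H ≤ filt W i := by
  rintro _ ⟨_, ⟨z, -, rfl⟩, rfl⟩
  rw [TrMap_eq, LinearMap.smul_apply, conjSum_apply]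
  exact Submodule.smul_mem _ _ <| Submodule.sum_mem _ fun g _ =>
    conj_mem_filt g (subgroupAlgebraIncl_mem_filt hH z)

theorem conjSum_of_mem_centerTrace {H : Subgroup W} {w : W} (hw : w ∈ H) :
    conjSum ℂ W (of ℂ W w) ∈ centerTrace W H := by
  have := Fintype.ofFinite H
  rw [show of ℂ W w = subgroupAlgebraIncl W H (of ℂ H ⟨w, hw⟩) from
      (mapDomainAlgHom_of H.subtype ⟨w, hw⟩).symm,
    ← TrMap_subgroupAlgebraIncl_conjSum]
  exact Submodule.mem_map_of_mem (Submodule.mem_map_of_mem (conjSum_mem_center _))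

theorem conjSum_mem_iSup_centerTrace [FiniteDimensional ℂ V]
    (hrefl : Subgroup.closure {s : W | cod W s = 1} = ⊤) (hfix : groupFixed W ⊤ = ⊥) {r : ℕ}
    (hr : r ≤ finrank ℂ V) {x : MonoidAlgebra ℂ W} (hx : x ∈ filt W r) :
    conjSum ℂ W x ∈ ⨆ (U : Submodule ℂ V)
      (_ : finrank ℂ V - finrank ℂ (groupFixed W (fixator W U)) = r),
        centerTrace W (fixator W U) := by
  refine Submodule.mem_comap.1 ((Submodule.span_le.2 ?_) hx)
  rintro _ ⟨w, hw, rfl⟩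
  obtain ⟨U, hwU, hU⟩ := exists_mem_fixator_codim_eq hrefl hfix hr hw
  exact Submodule.mem_iSup_of_mem U (Submodule.mem_iSup_of_mem hU
    (conjSum_of_mem_centerTrace hwU))

end Traces

/-- For a reflection group `W ≤ GL(V)` (generated by its reflections, with `V^W = 0`)
and `0 ≤ r ≤ n = dim V`, one has
`Z(ℂW) ∩ F_r(ℂW) = Σ_{W'} Tr_{W'}^W(Z(ℂW'))`, the sum running over the parabolic
subgroups `W' = W_U` (for subspaces `U ⊆ V`) with `dim V − dim V^{W'} = r`. -/
theorem center_filt_eq_sup_traces_of_parabolics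
    (V : Type*) [AddCommGroup V] [Module ℂ V] [FiniteDimensional ℂ V]
    (W : Subgroup (V →ₗ[ℂ] V)ˣ) [Fintype W]
    (hrefl : Subgroup.closure {s : W | cod W s = 1} = ⊤)
    (hfix : groupFixed W ⊤ = ⊥)
    (r : ℕ) (hr : r ≤ Module.finrank ℂ V) :
    Subalgebra.toSubmodule (Subalgebra.center ℂ (MonoidAlgebra ℂ W)) ⊓ filt W r
      = ⨆ (U : Submodule ℂ V)
          (_ : Module.finrank ℂ V - Module.finrank ℂ (groupFixed W (fixator W U)) = r),
          Submodule.map (TrMap W (fixator W U))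
            (Submodule.map (subgroupAlgebraIncl W (fixator W U)).toLinearMap
              (Subalgebra.toSubmodule
                (Subalgebra.center ℂ (MonoidAlgebra ℂ (fixator W U))))) := by
  change _ = ⨆ (U : Submodule ℂ V) (_ : _ = r), centerTrace W (fixator W U)
  refine le_antisymm ?_ <| iSup₂_le fun U hU => le_inf (centerTrace_le_center _)
    (centerTrace_le_filt fun h hh => hU ▸ cod_le_of_mem_fixator hh)
  rintro x ⟨hxc, hxf⟩
  rw [← inv_card_smul_conjSum_of_mem_center hxc]
  exact Submodule.smul_mem _ _ (conjSum_mem_iSup_centerTrace hrefl hfix hr hxf)
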